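/- The matrix Γ indexed by subsets of [n-1] with entries Γ_{ST} = #{w ∈ S_n : C(w) = [n-1]\S and D(w) = T} is invertible over ℚ and its inverse satisfies (Γ^{-1})_{ST} = (-1)^{|S|+|T|} Γ_{ST}. -/

import Mathlib

/-!
A permutation `v` satisfies `A ⊆ C(v)` iff it preserves every block of positions obtained by
cutting after each element of `A`; call their number `e(A)`. For `A ⊆ B`, sorting the values of
`u` inside each `B`-block selects a unique element of the coset `u * {v | B ⊆ C(v)}`, and the
selected elements are exactly the `w` with `A ⊆ C(w)` and `D(w) ⊆ B`. Hence
`#{w | A ⊆ C(w), D(w) ⊆ B} * e(B) = e(A)`, and with `α(V) = #{w | D(w) ⊆ Vᶜ}` this gives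
`M S T := #{w | Sᶜ ⊆ C(w), D(w) ⊆ T} = α(S \ T) / α(S)`.

Let `ζ` be the zeta matrix of the subset order and `σ = diag((-1)^|S|)`. Möbius inversion says
that `R = ζ * σ` is an involution, and reversing permutations (which complements descent sets)
shows `R α = α`. As `M = ζ * Γ * ζᵀ`, this yields `σ * Γ = R * D⁻¹ * R * D * R` with
`D = diag α`, a conjugate of `R`; so `(σ * Γ)² = 1`, i.e. `Γ⁻¹ = σ * Γ * σ`.
-/

open Finset

/-- The connectivity set of a word `w` of length `n+1` (0-based indices in `[n-1]` ≅ `Fin n`):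
`i ∈ C(w)` iff `w j < w k` whenever `j ≤ i < k`. -/
def Cset {n : ℕ} {α : Type*} [LinearOrder α] (w : Fin (n+1) → α) : Finset (Fin n) :=
  Finset.univ.filter (fun i => ∀ j k : Fin (n+1), (j : ℕ) ≤ (i : ℕ) → (i : ℕ) < (k : ℕ) → w j < w k)

/-- The descent set of a permutation of `[n]` (modelled on `Fin (n+1)`, 0-based). -/
def Dset {n : ℕ} (w : Equiv.Perm (Fin (n+1))) : Finset (Fin n) :=
  Finset.univ.filter (fun i => w i.succ < w i.castSucc)

/-- The list of gaps `i₁, i₂-i₁, …, n - i_k` determined by `S = {i₁ < … < i_k} ⊆ [n-1]`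
(here the ambient set is `[n]` with `n+1` replaced appropriately: sets live in `Fin n`,
permutations act on `n+1` points). -/
def gaps {n : ℕ} (S : Finset (Fin n)) : List ℕ :=
  let l := (S.sort (· ≤ ·)).map (fun i => (i : ℕ) + 1)
  List.zipWith (fun a b => b - a) (0 :: l) (l ++ [n+1])

/-- `η(S) = i₁!(i₂-i₁)!⋯(n-i_k)!`. -/
def eta {n : ℕ} (S : Finset (Fin n)) : ℕ := ((gaps S).map Nat.factorial).prod

/-- The number of inversions of a permutation. -/
def invNum {m : ℕ} (w : Equiv.Perm (Fin m)) : ℕ :=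
  (Finset.univ.filter (fun p : Fin m × Fin m => p.1 < p.2 ∧ w p.2 < w p.1)).card

/-- `z(T)`: sum of binomial coefficients `C(gap, 2)` over the gaps of the complement of `T`. -/
def zstat {n : ℕ} (T : Finset (Fin n)) : ℕ := ((gaps Tᶜ).map (fun a => a.choose 2)).sum

/-- The `q`-factorial `[j]!_q` in `ℤ[q]`. -/
noncomputable def qFact (j : ℕ) : Polynomial ℤ :=
  ∏ a ∈ Finset.range j, ∑ b ∈ Finset.range (a+1), Polynomial.X ^ b

/-- `η(S, q)`, the `q`-analogue of `η(S)`. -/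
noncomputable def etaq {n : ℕ} (S : Finset (Fin n)) : Polynomial ℤ := ((gaps S).map qFact).prod

open Matrix Equiv

section SubsetMatrices

variable {ι K : Type*} [DecidableEq ι] [CommRing K]

def subsetZeta : Matrix (Finset ι) (Finset ι) K :=
  of fun S T => if T ⊆ S then 1 else 0

def cardSign : Matrix (Finset ι) (Finset ι) K :=
  diagonal fun S => (-1) ^ #S

lemma sum_powerset_neg_one_pow_card_eq_ite (V : Finset ι) :
    ∑ U ∈ V.powerset, (-1 : K) ^ #U = if V = ∅ then 1 else 0 := by
  have h := congrArg (Int.cast : ℤ → K) (sum_powerset_neg_one_pow_card (x := V))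
  push_cast at h
  exact h

lemma sum_Icc_neg_one_pow_card (V S : Finset ι) :
    ∑ T ∈ Icc V S, (-1 : K) ^ #T = if S = V then (-1) ^ #S else 0 := by
  by_cases hVS : V ⊆ S
  · have hinj : Set.InjOn (V ∪ ·) (S \ V).powerset := fun U hU U' hU' h => by
      simp only [coe_powerset, Set.mem_preimage, Set.mem_powerset_iff, coe_subset] at hU hU'
      rw [← union_sdiff_cancel_left (disjoint_of_subset_right hU disjoint_sdiff),
        ← union_sdiff_cancel_left (disjoint_of_subset_right hU' disjoint_sdiff)]
      exact congrArg (· \ V) h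
    rw [Icc_eq_image_powerset hVS, sum_image hinj]
    have hcard : ∀ U ∈ (S \ V).powerset, (-1 : K) ^ #(V ∪ U) = (-1) ^ #V * (-1) ^ #U :=
      fun U hU => by
        rw [card_union_of_disjoint (disjoint_of_subset_right (mem_powerset.1 hU) disjoint_sdiff),
          pow_add]
    rw [sum_congr rfl hcard, ← mul_sum, sum_powerset_neg_one_pow_card_eq_ite]
    simp only [sdiff_eq_empty_iff_subset]
    by_cases hSV : S = V
    · simp [hSV]
    · have hSV' : ¬S ⊆ V := fun h => hSV (h.antisymm hVS)
      simp [hSV, hSV']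
  · rw [Icc_eq_empty (fun h => hVS h), sum_empty, if_neg (fun h => hVS h.ge)]

variable [Fintype ι]

lemma cardSign_mul_cardSign :
    cardSign * cardSign = (1 : Matrix (Finset ι) (Finset ι) K) := by
  simp only [cardSign, diagonal_mul_diagonal, ← mul_pow, neg_one_mul, neg_neg, one_pow,
    diagonal_one]

lemma subsetZeta_mul_cardSign_mul_subsetZeta :
    subsetZeta * cardSign * subsetZeta = (cardSign : Matrix (Finset ι) (Finset ι) K) := by
  ext S V
  conv_rhs =>
    rw [cardSign, diagonal_apply, ← sum_Icc_neg_one_pow_card V S, ← Fintype.sum_ite_mem]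
  rw [mul_apply]
  refine sum_congr rfl fun T _ => ?_
  simp only [cardSign, subsetZeta, mul_diagonal, of_apply, mem_Icc]
  by_cases hTS : T ⊆ S <;> by_cases hVT : V ⊆ T <;> simp [hTS, hVT]

lemma subsetZeta_mul_cardSign_mul_subsetZeta_transpose :
    subsetZeta * cardSign * subsetZetaᵀ =
      (of fun S T => if Disjoint S T then 1 else 0 : Matrix (Finset ι) (Finset ι) K) := by
  ext S V
  simp only [of_apply, disjoint_iff_inter_eq_empty]
  conv_rhs => rw [← sum_powerset_neg_one_pow_card_eq_ite, ← Fintype.sum_ite_mem]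
  rw [mul_apply]
  refine sum_congr rfl fun T _ => ?_
  simp only [cardSign, subsetZeta, mul_diagonal, of_apply, transpose_apply, mem_powerset,
    subset_inter_iff]
  by_cases hTS : T ⊆ S <;> by_cases hTV : T ⊆ V <;> simp [hTS, hTV]

lemma subsetZeta_mul_mul_transpose_apply (G : Matrix (Finset ι) (Finset ι) K) (S T : Finset ι) :
    (subsetZeta * G * subsetZetaᵀ : Matrix (Finset ι) (Finset ι) K) S T =
      ∑ S' ∈ S.powerset, ∑ T' ∈ T.powerset, G S' T' := by
  simp only [mul_apply, subsetZeta, transpose_apply, of_apply, ite_mul, one_mul, zero_mul,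
    mul_ite, mul_one, mul_zero, ← mem_powerset, Fintype.sum_ite_mem]
  exact sum_comm

lemma of_sdiff_eq_subsetZeta_mul_cardSign_mul {α : Finset ι → K}
    (hα : ∀ V, ∑ U ∈ V.powerset, (-1) ^ #U * α U = α V) :
    of (fun S T => α (S \ T)) =
      subsetZeta * cardSign * diagonal α * (subsetZeta * cardSign * subsetZetaᵀ) := by
  rw [subsetZeta_mul_cardSign_mul_subsetZeta_transpose]
  ext S T
  rw [of_apply, ← hα, mul_apply, ← Fintype.sum_ite_mem]
  refine sum_congr rfl fun U _ => ?_
  simp only [cardSign, subsetZeta, mul_diagonal, of_apply, mem_powerset, subset_sdiff]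
  by_cases hUS : U ⊆ S <;> by_cases hUT : Disjoint U T <;> simp [hUS, hUT]

theorem mul_cardSign_mul_mul_cardSign_eq_one {K : Type*} [Field K] {α : Finset ι → K}
    (hα₀ : ∀ V, α V ≠ 0) (hα : ∀ V, ∑ U ∈ V.powerset, (-1) ^ #U * α U = α V)
    {G : Matrix (Finset ι) (Finset ι) K}
    (hG : ∀ S T, ∑ S' ∈ S.powerset, ∑ T' ∈ T.powerset, G S' T' = α (S \ T) / α S) :
    G * (cardSign * G * cardSign) = 1 := by
  set Z : Matrix (Finset ι) (Finset ι) K := subsetZeta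
  set s : Matrix (Finset ι) (Finset ι) K := cardSign
  have hs : s * s = 1 := cardSign_mul_cardSign
  have hZsZ : Z * s * Z = s := subsetZeta_mul_cardSign_mul_subsetZeta
  have hZt : Zᵀ * s * Zᵀ * s = 1 := by
    have h := congrArg transpose hZsZ
    rw [transpose_mul, transpose_mul, show sᵀ = s from diagonal_transpose _, ← mul_assoc] at h
    rw [h, hs]
  have hDD' : diagonal α * diagonal α⁻¹ = 1 := by
    rw [diagonal_mul_diagonal, ← diagonal_one]
    exact congrArg diagonal (funext fun V => mul_inv_cancel₀ (hα₀ V))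
  have hD'D : diagonal α⁻¹ * diagonal α = 1 := by
    rw [diagonal_mul_diagonal, ← diagonal_one]
    exact congrArg diagonal (funext fun V => inv_mul_cancel₀ (hα₀ V))
  have hZGZt : Z * G * Zᵀ = diagonal α⁻¹ * (Z * s * diagonal α * (Z * s * Zᵀ)) := by
    rw [← of_sdiff_eq_subsetZeta_mul_cardSign_mul hα]
    ext S T
    rw [subsetZeta_mul_mul_transpose_apply, hG, diagonal_mul, of_apply, div_eq_inv_mul,
      Pi.inv_apply]
  have hsG : s * G = Z * s * diagonal α⁻¹ * (Z * s) * diagonal α * (Z * s) := by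
    calc s * G = Z * s * Z * G * (Zᵀ * s * Zᵀ * s) := by rw [hZsZ, hZt, mul_one]
      _ = Z * s * (Z * G * Zᵀ) * (s * Zᵀ * s) := by simp only [mul_assoc]
      _ = _ := by
        rw [hZGZt]
        simp only [mul_assoc] at hZt ⊢
        rw [hZt, mul_one]
  have hR : Z * s * (Z * s) = 1 := by rw [← mul_assoc, hZsZ, hs]
  -- `s * G` is the conjugate of the involution `R = Z * s` by `R * D⁻¹`
  have hsG_sq : s * G * (s * G) = 1 := by
    rw [hsG]
    generalize Z * s = R at hR
    simp only [mul_assoc] at hR hDD' hD'D ⊢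
    simp only [← mul_assoc (diagonal α), hDD', ← mul_assoc (diagonal α⁻¹), hD'D, ← mul_assoc R,
      hR, one_mul]
  calc G * (s * G * s) = s * (s * G * (s * G)) * s := by simp only [← mul_assoc, hs, one_mul]
    _ = 1 := by rw [hsG_sq, mul_one, hs]

end SubsetMatrices

section BlocksOfPositions

variable {n : ℕ}

def blockIndex (A : Finset (Fin n)) (x : Fin (n + 1)) : ℕ := #{c ∈ A | c.val < x.val}

lemma blockIndex_mono (A : Finset (Fin n)) : Monotone (blockIndex A) := fun x y hxy =>
  card_le_card fun c hc => by
    simp only [mem_filter] at hc ⊢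
    exact ⟨hc.1, hc.2.trans_le hxy⟩

lemma blockIndex_lt_of_mem {A : Finset (Fin n)} {i : Fin n} {x y : Fin (n + 1)} (hi : i ∈ A)
    (hx : (x : ℕ) ≤ i) (hy : (i : ℕ) < y) : blockIndex A x < blockIndex A y := by
  refine card_lt_card ((ssubset_iff_of_subset fun c hc => ?_).2 ⟨i, ?_, ?_⟩)
  · simp only [mem_filter] at hc ⊢
    exact ⟨hc.1, by omega⟩
  · simpa [hi] using hy
  · simp [hx]

lemma blockIndex_castSucc_eq_succ {A : Finset (Fin n)} {i : Fin n} (hi : i ∉ A) :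
    blockIndex A i.castSucc = blockIndex A i.succ := by
  refine congrArg card (filter_congr fun c hc => ?_)
  have : (c : ℕ) ≠ i := fun h => hi (Fin.ext h ▸ hc)
  simp only [Fin.val_castSucc, Fin.val_succ]
  omega

lemma mem_Cset_iff {v : Perm (Fin (n + 1))} {i : Fin n} :
    i ∈ Cset v ↔ ∀ x, ((v x : ℕ) ≤ i ↔ (x : ℕ) ≤ i) := by
  simp only [Cset, mem_filter, mem_univ, true_and]
  constructor
  · intro h
    set P : Finset (Fin (n + 1)) := {x | (x : ℕ) ≤ i}
    set Q : Finset (Fin (n + 1)) := {x | (v x : ℕ) ≤ i}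
    have hcard : #Q = #P := card_equiv v (by simp [P, Q])
    -- `#P = #Q`, so `P \ Q` and `Q \ P` are empty together; `j ∈ P \ Q`, `k ∈ Q \ P` contradict `h`
    have hPQ : P \ Q = ∅ := by
      by_contra hne
      obtain ⟨j, hj⟩ := nonempty_iff_ne_empty.2 hne
      obtain ⟨k, hk⟩ := card_pos.1 ((card_sdiff_comm hcard).trans_gt (card_pos.2 ⟨j, hj⟩))
      simp only [P, Q, mem_sdiff, mem_filter, mem_univ, true_and, not_le] at hj hk
      have := Fin.lt_def.1 (h j k hj.1 hk.2)
      omega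
    have hQP : Q \ P = ∅ := card_eq_zero.1 (by rw [card_sdiff_comm hcard, hPQ, card_empty])
    intro x
    have h₁ := sdiff_eq_empty_iff_subset.1 hPQ (x := x)
    have h₂ := sdiff_eq_empty_iff_subset.1 hQP (x := x)
    simp only [P, Q, mem_filter, mem_univ, true_and] at h₁ h₂
    exact ⟨h₂, h₁⟩
  · intro h j k hj hk
    have := (h j).2 hj
    have := (h k).not.2 (by omega)
    exact Fin.lt_def.2 (by omega)

lemma subset_Cset_iff {A : Finset (Fin n)} {v : Perm (Fin (n + 1))} :
    A ⊆ Cset v ↔ ∀ x, blockIndex A (v x) = blockIndex A x := by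
  constructor
  · intro h x
    refine congrArg card (filter_congr fun c hc => ?_)
    simpa only [not_le] using ((mem_Cset_iff.1 (h hc)) x).not
  · intro h i hi
    refine mem_Cset_iff.2 fun x => ⟨fun hvx => ?_, fun hx => ?_⟩
    · by_contra hx
      exact (blockIndex_lt_of_mem hi hvx (not_le.1 hx)).ne (h x)
    · by_contra hvx
      exact (blockIndex_lt_of_mem hi hx (not_le.1 hvx)).ne (h x).symm

lemma subset_Cset_mul {A : Finset (Fin n)} {w v : Perm (Fin (n + 1))} (hw : A ⊆ Cset w)
    (hv : A ⊆ Cset v) : A ⊆ Cset (w * v) := by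
  rw [subset_Cset_iff] at hw hv ⊢
  intro x
  rw [Perm.mul_apply, hw, hv]

lemma subset_Cset_inv {A : Finset (Fin n)} {v : Perm (Fin (n + 1))} (hv : A ⊆ Cset v) :
    A ⊆ Cset ⇑v⁻¹ := by
  rw [subset_Cset_iff] at hv ⊢
  intro x
  simpa using (hv (v⁻¹ x)).symm

lemma disjoint_Cset_Dset (w : Perm (Fin (n + 1))) : Disjoint (Cset w) (Dset w) := by
  refine disjoint_left.2 fun i hC hD => ?_
  simp only [Cset, Dset, mem_filter, mem_univ, true_and] at hC hD
  exact (hC i.castSucc i.succ le_rfl (by simp)).not_gt hD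

lemma monotone_toLex_blockIndex_iff {B : Finset (Fin n)} {w : Perm (Fin (n + 1))} :
    Monotone (fun x => toLex (blockIndex B x, w x)) ↔ Dset w ⊆ B := by
  simp only [Fin.monotone_iff_le_succ, Prod.Lex.toLex_le_toLex, subset_iff, Dset, mem_filter,
    mem_univ, true_and]
  refine forall_congr' fun i => ?_
  by_cases hi : i ∈ B
  · simp only [hi, imp_true_iff, iff_true]
    exact Or.inl (blockIndex_lt_of_mem hi (by simp) (by simp))
  · simp [hi, blockIndex_castSucc_eq_succ hi]

end BlocksOfPositions

section Factorization

variable {n : ℕ}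

lemma toLex_blockIndex_mul_comp_inv {B : Finset (Fin n)} {w v : Perm (Fin (n + 1))}
    (hv : B ⊆ Cset v) :
    (fun x => toLex (blockIndex B x, (w * v) x)) ∘ ⇑v⁻¹ =
      fun x => toLex (blockIndex B x, w x) := by
  funext x
  rw [Function.comp_apply, subset_Cset_iff.1 (subset_Cset_inv hv) x, ← Perm.mul_apply,
    mul_inv_cancel_right]

theorem card_Cset_Dset_mul_card_Cset {A B : Finset (Fin n)} (hAB : A ⊆ B) :
    #{w : Perm (Fin (n + 1)) | A ⊆ Cset w ∧ Dset w ⊆ B} *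
        #{v : Perm (Fin (n + 1)) | B ⊆ Cset v} =
      #{u : Perm (Fin (n + 1)) | A ⊆ Cset u} := by
  rw [← card_product]
  refine card_bij (fun p _ => p.1 * p.2) ?_ ?_ ?_
  · rintro ⟨w, v⟩ hp
    simp only [mem_product, mem_filter, mem_univ, true_and] at hp ⊢
    exact subset_Cset_mul hp.1.1 (hAB.trans hp.2)
  · rintro ⟨w₁, v₁⟩ h₁ ⟨w₂, v₂⟩ h₂ (h : w₁ * v₁ = w₂ * v₂)
    simp only [mem_product, mem_filter, mem_univ, true_and] at h₁ h₂
    have hmono₁ := monotone_toLex_blockIndex_iff.2 h₁.1.2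
    have hmono₂ := monotone_toLex_blockIndex_iff.2 h₂.1.2
    rw [← toLex_blockIndex_mul_comp_inv h₁.2] at hmono₁
    rw [← toLex_blockIndex_mul_comp_inv h₂.2, ← h] at hmono₂
    have hw := Tuple.unique_monotone hmono₁ hmono₂
    rw [toLex_blockIndex_mul_comp_inv h₁.2, h, toLex_blockIndex_mul_comp_inv h₂.2] at hw
    obtain rfl : w₁ = w₂ := Perm.ext fun x => by simpa using congrFun hw x
    rw [mul_left_cancel h]
  · intro u hu
    simp only [mem_filter, mem_univ, true_and] at hu
    set σ := Tuple.sort fun x => toLex (blockIndex B x, u x)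
    have hmono := Tuple.monotone_sort fun x => toLex (blockIndex B x, u x)
    have hσ : B ⊆ Cset σ := by
      have := Tuple.unique_monotone (σ := σ) (τ := 1) (Prod.Lex.monotone_fst_ofLex.comp hmono)
        (by simpa using blockIndex_mono B)
      exact subset_Cset_iff.2 fun x => by simpa using congrFun this x
    refine ⟨(u * σ, σ⁻¹), ?_, mul_inv_cancel_right u σ⟩
    simp only [mem_product, mem_filter, mem_univ, true_and]
    refine ⟨⟨subset_Cset_mul hu (hAB.trans hσ), ?_⟩, subset_Cset_inv hσ⟩
    have hcomp : (fun x => toLex (blockIndex B x, (u * σ) x)) =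
        (fun x => toLex (blockIndex B x, u x)) ∘ σ :=
      funext fun x => by simp [subset_Cset_iff.1 hσ x]
    exact monotone_toLex_blockIndex_iff.1 (hcomp ▸ hmono)

end Factorization

section Counting

variable {n : ℕ}

lemma card_Dset_subset_mul_card_Cset (B : Finset (Fin n)) :
    #{w : Perm (Fin (n + 1)) | Dset w ⊆ B} * #{v : Perm (Fin (n + 1)) | B ⊆ Cset v} =
      (n + 1).factorial := by
  simpa [Fintype.card_perm] using card_Cset_Dset_mul_card_Cset (empty_subset B)

lemma card_Dset_subset_ne_zero (B : Finset (Fin n)) :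
    #{w : Perm (Fin (n + 1)) | Dset w ⊆ B} ≠ 0 :=
  left_ne_zero_of_mul ((card_Dset_subset_mul_card_Cset B).symm ▸ (Nat.factorial_pos _).ne')

lemma card_Cset_Dset_subset_eq_div (S T : Finset (Fin n)) :
    (#{w : Perm (Fin (n + 1)) | Sᶜ ⊆ Cset w ∧ Dset w ⊆ T} : ℚ) =
      #{w : Perm (Fin (n + 1)) | Dset w ⊆ (S \ T)ᶜ} /
        #{w : Perm (Fin (n + 1)) | Dset w ⊆ Sᶜ} := by
  have hM : #{w : Perm (Fin (n + 1)) | Sᶜ ⊆ Cset w ∧ Dset w ⊆ Sᶜ ∪ T} =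
      #{w : Perm (Fin (n + 1)) | Sᶜ ⊆ Cset w ∧ Dset w ⊆ T} := by
    refine congrArg card (filter_congr fun w _ => and_congr_right fun hC => ⟨fun hD i hi => ?_,
      fun hD => hD.trans subset_union_right⟩)
    exact (mem_union.1 (hD hi)).resolve_left fun hS =>
      disjoint_left.1 (disjoint_Cset_Dset w) (hC hS) hi
  have h₁ := card_Cset_Dset_mul_card_Cset (subset_union_left (s₁ := Sᶜ) (s₂ := T))
  have h₂ := card_Dset_subset_mul_card_Cset (S \ T)ᶜ
  have h₃ := card_Dset_subset_mul_card_Cset Sᶜ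
  rw [hM] at h₁
  rw [show (S \ T)ᶜ = Sᶜ ∪ T by rw [sdiff_eq, compl_inf, compl_compl]; rfl] at h₂ ⊢
  have he := right_ne_zero_of_mul (h₂ ▸ (Nat.factorial_pos _).ne')
  rw [eq_div_iff (Nat.cast_ne_zero.2 (card_Dset_subset_ne_zero Sᶜ))]
  apply mul_right_cancel₀ (b := (#{v : Perm (Fin (n + 1)) | Sᶜ ∪ T ⊆ Cset v} : ℚ))
    (by exact_mod_cast he)
  have h₁' : _ = (_ : ℚ) := congrArg (Nat.cast (R := ℚ)) h₁
  have h₂' : _ = (_ : ℚ) := congrArg (Nat.cast (R := ℚ)) h₂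
  have h₃' : _ = (_ : ℚ) := congrArg (Nat.cast (R := ℚ)) h₃
  push_cast at h₁' h₂' h₃'
  linear_combination (#{w : Perm (Fin (n + 1)) | Dset w ⊆ Sᶜ} : ℚ) * h₁' + h₃' - h₂'

lemma Dset_revPerm_mul (w : Perm (Fin (n + 1))) : Dset (Fin.revPerm * w) = (Dset w)ᶜ := by
  ext i
  have hne : w i.castSucc ≠ w i.succ := w.injective.ne Fin.castSucc_lt_succ.ne
  simp only [Dset, mem_filter, mem_univ, true_and, mem_compl, Perm.mul_apply, Fin.revPerm_apply,
    Fin.rev_lt_rev, not_lt]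
  exact ⟨le_of_lt, fun h => lt_of_le_of_ne h hne⟩

lemma card_filter_compl_Dset (p : Finset (Fin n) → Prop) [DecidablePred p] :
    #{w : Perm (Fin (n + 1)) | p (Dset w)ᶜ} = #{w : Perm (Fin (n + 1)) | p (Dset w)} :=
  card_equiv (Equiv.mulLeft Fin.revPerm) (by simp [Dset_revPerm_mul])

lemma sum_powerset_neg_one_pow_mul_card_Dset_subset_compl (V : Finset (Fin n)) :
    ∑ U ∈ V.powerset, (-1 : ℚ) ^ #U * #{w : Perm (Fin (n + 1)) | Dset w ⊆ Uᶜ} =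
      #{w : Perm (Fin (n + 1)) | Dset w ⊆ Vᶜ} := by
  have hV : #{w : Perm (Fin (n + 1)) | Dset w ⊆ Vᶜ} =
      #{w : Perm (Fin (n + 1)) | V ⊆ Dset w} := by
    rw [← card_filter_compl_Dset]
    simp_rw [subset_compl_comm]
  rw [hV]
  simp only [card_filter, Nat.cast_sum, Nat.cast_ite, Nat.cast_one, Nat.cast_zero, mul_sum]
  rw [sum_comm]
  refine sum_congr rfl fun w _ => ?_
  have hfilter : {U ∈ V.powerset | Dset w ⊆ Uᶜ} = (V \ Dset w).powerset := by
    ext U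
    simp [subset_sdiff, subset_compl_iff_disjoint_right, disjoint_comm]
  simp only [← sdiff_eq_empty_iff_subset (s := V)]
  rw [← sum_powerset_neg_one_pow_card_eq_ite, ← hfilter, sum_filter]
  simp only [mul_ite, mul_one, mul_zero]

lemma sum_powerset_card_Cset_eq_Dset_eq (S T : Finset (Fin n)) :
    ∑ S' ∈ S.powerset, ∑ T' ∈ T.powerset,
        #{w : Perm (Fin (n + 1)) | Cset w = S'ᶜ ∧ Dset w = T'} =
      #{w : Perm (Fin (n + 1)) | Sᶜ ⊆ Cset w ∧ Dset w ⊆ T} := by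
  rw [← sum_product', eq_comm, card_eq_sum_card_fiberwise
    (f := fun w : Perm (Fin (n + 1)) => ((Cset w)ᶜ, Dset w)) (t := S.powerset ×ˢ T.powerset)]
  swap
  · intro w hw
    simp only [coe_filter, coe_product, coe_powerset, Set.mem_ofPred_eq, Set.mem_prod,
      Set.mem_preimage, Set.mem_powerset_iff, coe_subset, mem_univ, true_and] at hw ⊢
    exact ⟨compl_le_iff_compl_le.1 hw.1, hw.2⟩
  refine sum_congr rfl fun ⟨S', T'⟩ hST => ?_
  simp only [mem_product, mem_powerset] at hST
  rw [filter_filter]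
  refine congrArg card (filter_congr fun w _ => ?_)
  simp only [Prod.mk.injEq]
  constructor
  · rintro ⟨-, hC, hD⟩
    exact ⟨by rw [← hC, compl_compl], hD⟩
  · rintro ⟨hC, hD⟩
    exact ⟨⟨hC ▸ compl_subset_compl.2 hST.1, hD ▸ hST.2⟩, by rw [hC, compl_compl], hD⟩

end Counting

/-- The matrix `Γ` with `Γ_{ST} = #{w : C(w) = [n-1]\S, D(w) = T}` is invertible over `ℚ`
with `(Γ⁻¹)_{ST} = (-1)^{|S|+|T|} Γ_{ST}`. -/
theorem stmt9 (n : ℕ)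
    (G : Matrix (Finset (Fin n)) (Finset (Fin n)) ℚ)
    (hG : ∀ S T, G S T = (Finset.univ.filter
        (fun w : Equiv.Perm (Fin (n+1)) => Cset ⇑w = Sᶜ ∧ Dset w = T)).card)
    (G' : Matrix (Finset (Fin n)) (Finset (Fin n)) ℚ)
    (hG' : ∀ S T, G' S T = (-1) ^ (S.card + T.card) * G S T) :
    G * G' = 1 ∧ G' * G = 1 := by
  have hG'_eq : G' = cardSign * G * cardSign := by
    ext S T
    rw [hG', cardSign, mul_diagonal, diagonal_mul, pow_add]
    ring
  have hsum : ∀ S T, ∑ S' ∈ S.powerset, ∑ T' ∈ T.powerset, G S' T' =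
      (#{w : Perm (Fin (n + 1)) | Dset w ⊆ (S \ T)ᶜ} : ℚ) /
        #{w : Perm (Fin (n + 1)) | Dset w ⊆ Sᶜ} := fun S T => by
    simp only [hG]
    rw [← card_Cset_Dset_subset_eq_div, ← sum_powerset_card_Cset_eq_Dset_eq]
    push_cast
    rfl
  have hGG' : G * G' = 1 := hG'_eq ▸ mul_cardSign_mul_mul_cardSign_eq_one
    (fun V => Nat.cast_ne_zero.2 (card_Dset_subset_ne_zero Vᶜ))
    sum_powerset_neg_one_pow_mul_card_Dset_subset_compl hsum
  exact ⟨hGG', mul_eq_one_comm.1 hGG'⟩
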